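/- Under the same hypotheses as the atomic-operator theorem, for w ∈ W^λ and i ∈ I: F_i(A_w(λ)) = A_w(λ) if s_i w < w or s_i w ∉ W^λ, and F_i(A_w(λ)) = A_w(λ) ⊔ A_{s_i w}(λ) (disjoint union) if w < s_i w and s_i w ∈ W^λ. -/

import Mathlib

/-- A (normal) crystal graph structure: a set `B` with partial raising and lowering
operators `e i`, `f i` satisfying `f i x = some y ↔ e i y = some x`. -/
structure Crystal (I B : Type*) where
  e : I → B → Option B
  f : I → B → Option B
  ef : ∀ i x y, f i x = some y ↔ e i y = some x

namespace Crystal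

variable {I B : Type*} (c : Crystal I B)

/-- One raising step along `i`. -/
def eStep (i : I) (x y : B) : Prop := c.e i x = some y

/-- One lowering step along `i`. -/
def fStep (i : I) (x y : B) : Prop := c.f i x = some y

/-- `y` lies on the same `i`-string as `x` (equivalence generated by raising steps). -/
def SameString (i : I) : B → B → Prop := Relation.EqvGen (c.eStep i)

/-- The `i`-string through `x`. -/
def string (i : I) (x : B) : Set B := {y | c.SameString i x y}

/-- `u` is a top (highest weight) element of its `i`-string, i.e. `e i u = 0`. -/
def IsTop (i : I) (u : B) : Prop := c.e i u = none

/-- A subset `X ⊆ B` is extremal if for every `i`-string `S`,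
`X ∩ S ∈ {∅, {u_S}, S}`, where `u_S` is the top element of `S`. -/
def Extremal (X : Set B) : Prop :=
  ∀ (i : I) (x : B),
    X ∩ c.string i x = ∅ ∨
    (∃ u ∈ c.string i x, c.IsTop i u ∧ X ∩ c.string i x = {u}) ∨
    c.string i x ⊆ X

/-- A raising step along some index. -/
def raiseStep (x y : B) : Prop := ∃ i, c.e i x = some y

/-- A lowering step along some index. -/
def lowerStep (x y : B) : Prop := ∃ i, c.f i x = some y

/-- `E(L)`: the closure of `L` under the raising operators. -/
def eClosure (L : Set B) : Set B :=
  {y | ∃ z ∈ L, Relation.ReflTransGen c.raiseStep z y}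

/-- `b` is the highest weight element of a connected highest weight crystal:
it is killed by every raising operator, and every element is reachable from `b`
by applying lowering operators. -/
def IsHighestWeight (b : B) : Prop :=
  (∀ i, c.e i b = none) ∧ ∀ x, Relation.ReflTransGen c.lowerStep b x

/-- `x` is a lowest weight element of `X`: for each `i`, `f i x = 0` or `f i x ∉ X`. -/
def IsLowest (X : Set B) (x : B) : Prop :=
  x ∈ X ∧ ∀ i, c.f i x = none ∨ ∀ y, c.f i x = some y → y ∉ X

/-- `f_i^*`: `y` is obtained from `x` by applying `f i` maximally. -/
def fStarRel (i : I) (x y : B) : Prop :=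
  Relation.ReflTransGen (c.fStep i) x y ∧ c.f i y = none

/-- `y = f_{i_k}^* ⋯ f_{i_1}^* (x)` for the list of indices `[i_1, …, i_k]`. -/
def fStarChain : B → List I → B → Prop
  | x, [], y => y = x
  | x, i :: l, y => ∃ z, c.fStarRel i x z ∧ fStarChain z l y

end Crystal

namespace Crystal

/-- Iterated lowering operator `f_i^d`. -/
def fIter {I B : Type*} (c : Crystal I B) (i : I) : ℕ → B → Option B
  | 0, x => some x
  | d + 1, x => (c.f i x).bind (fIter c i d)

/-- The operator `F_i(X) = { f_i^d (x) : x ∈ X, d ≥ 0 } ∖ {0}`. -/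
def Fset {I B : Type*} (c : Crystal I B) (i : I) (X : Set B) : Set B :=
  {y | ∃ x ∈ X, ∃ d : ℕ, c.fIter i d x = some y}

/-- The atomic operator `𝒜_i(X) = F_i(X) ∖ X`. -/
def atomOp {I B : Type*} (c : Crystal I B) (i : I) (X : Set B) : Set B :=
  c.Fset i X \ X

/-- `atomChain c x [i_1, …, i_k] y` holds iff `y = f_{i_k}^{d_k} ⋯ f_{i_1}^{d_1} (x)`
for some `d_1, …, d_k > 0`, with each intermediate element annihilated by the raising
operator about to be applied: `e_{i_j} (f_{i_{j-1}}^{d_{j-1}} ⋯ f_{i_1}^{d_1} (x)) = 0`. -/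
def atomChain {I B : Type*} (c : Crystal I B) : B → List I → B → Prop
  | x, [], y => y = x
  | x, i :: l, y => c.e i x = none ∧ ∃ z, (∃ d : ℕ, 0 < d ∧ c.fIter i d x = some z) ∧
      atomChain c z l y

end Crystal

/-- Bruhat order via the subword property. -/
def bruhatLE {I W : Type*} [Group W] {M : CoxeterMatrix I} (cs : CoxeterSystem M W)
    (v w : W) : Prop :=
  ∀ ω : List I, cs.IsReduced ω → cs.wordProd ω = w →
    ∃ ω' : List I, ω'.Sublist ω ∧ cs.IsReduced ω' ∧ cs.wordProd ω' = v

/-- Strict Bruhat order. -/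
def bruhatLT {I W : Type*} [Group W] {M : CoxeterMatrix I} (cs : CoxeterSystem M W)
    (v w : W) : Prop :=
  bruhatLE cs v w ∧ v ≠ w

/-!
If `s_i w < w`, or `s_i w ∉ W^λ` (so that `B_{s_i w} = B_w`), then `B_w = 𝔇_i(B_{s_i w})` is
stable under `f_i`, and `f_i` cannot leave the atom `A_w` because the smaller Demazure crystals
are stable under `e_i`. If `w < s_i w ∈ W^λ`, the string property forces an element of `A_w`
whose `f_i`-string leaves `B_w` to be `e_i`-highest, so the string lies in
`B_{s_i w} = 𝔇_i(B_w)`, and the lifting property of the Bruhat order keeps it out of every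
smaller `B_v`. Conversely, an element of `A_{s_i w}` lies on the `f_i`-string of an
`e_i`-highest element of `B_w`, which cannot lie in a `B_v` with `v < w`: the string would then
lie in `B_v` or in `B_{s_i v}`, both below `B_{s_i w}`.

The Bruhat order facts rest on the exchange property, proved by Tits's parity argument: the
parity of the number of occurrences of a reflection in the right inversion sequence of a word
depends only on the element the word represents, being the cocycle of an action of `W` on
`W × ZMod 2`.
-/

namespace CoxeterSystem

variable {B W : Type*} [Group W] {M : CoxeterMatrix B} (cs : CoxeterSystem M W)

local prefix:100 "s" => cs.simple
local prefix:100 "π" => cs.wordProd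
local prefix:100 "ℓ" => cs.length
local prefix:100 "ris " => cs.rightInvSeq
local prefix:100 "lis " => cs.leftInvSeq

theorem prod_map_alternatingWord_two_mul {G : Type*} [Monoid G] (f : B → G) (i j : B) (m : ℕ) :
    ((alternatingWord i j (2 * m)).map f).prod = (f i * f j) ^ m := by
  induction m with
  | zero => simp [alternatingWord]
  | succ m ih =>
    rw [show 2 * (m + 1) = 2 * m + 1 + 1 by ring, alternatingWord_succ', alternatingWord_succ',
      if_neg (by simp [parity_simps]), if_pos (even_two_mul m)]
    simp [ih, pow_succ', mul_assoc]

theorem reverse_alternatingWord_two_mul (i j : B) (m : ℕ) :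
    (alternatingWord i j (2 * m)).reverse = alternatingWord j i (2 * m) := by
  refine List.ext_getElem (by simp) fun k h₁ h₂ => ?_
  simp only [List.length_reverse, length_alternatingWord] at h₁ h₂
  rw [List.getElem_reverse, getElem_alternatingWord _ _ _ _ (by simp; omega),
    getElem_alternatingWord _ _ _ _ h₂]
  simp only [length_alternatingWord, Nat.even_iff]
  split_ifs <;> first | rfl | omega

theorem even_count_rightInvSeq_alternatingWord [DecidableEq W] (i j : B) (t : W) :
    Even ((ris (alternatingWord i j (2 * M i j))).count t) := by
  rw [← reverse_alternatingWord_two_mul j i, rightInvSeq_reverse, List.count_reverse]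
  have hperiod : (lis (alternatingWord j i (2 * M i j))).drop (M i j) =
      (lis (alternatingWord j i (2 * M i j))).take (M i j) := by
    refine List.ext_getElem (by simp; omega) fun k h₁ h₂ => ?_
    simp only [List.length_drop, List.length_take, length_leftInvSeq,
      length_alternatingWord] at h₁ h₂
    rw [List.getElem_drop, List.getElem_take,
      getElem_leftInvSeq_alternatingWord _ _ _ _ _ (by omega),
      getElem_leftInvSeq_alternatingWord _ _ _ _ _ (by omega), prod_alternatingWord_eq_mul_pow,
      prod_alternatingWord_eq_mul_pow, show (2 * (M i j + k) + 1) / 2 = M i j + k by omega,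
      show (2 * k + 1) / 2 = k by omega, pow_add, simple_mul_simple_pow, one_mul]
    simp [parity_simps]
  rw [← List.take_append_drop (M i j) (lis (alternatingWord j i (2 * M i j))),
    List.count_append, hperiod]
  exact ⟨_, rfl⟩

section ReflectionRepresentation

variable [DecidableEq W]

def reflPerm (i : B) : Equiv.Perm (W × ZMod 2) :=
  Function.Involutive.toPerm (fun p => (s i * p.1 * s i, p.2 + if p.1 = s i then 1 else 0))
    fun p => by
      have hcond : s i * p.1 * s i = s i ↔ p.1 = s i := by
        constructor
        · intro h
          simpa [mul_assoc] using congrArg (fun x => s i * x * s i) h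
        · rintro h; simp [h]
      ext
      · simp [mul_assoc]
      · simp only [hcond, add_assoc, CharTwo.add_self_eq_zero, add_zero]

theorem reflPerm_apply (i : B) (p : W × ZMod 2) :
    cs.reflPerm i p = (s i * p.1 * s i, p.2 + if p.1 = s i then 1 else 0) := rfl

theorem prod_map_reflPerm_apply (ω : List B) (t : W) (z : ZMod 2) :
    (ω.map cs.reflPerm).prod (t, z) = (π ω * t * (π ω)⁻¹, z + ((ris ω).count t : ZMod 2)) := by
  induction ω with
  | nil => simp
  | cons a ω ih =>
    have hcond : π ω * t * (π ω)⁻¹ = s a ↔ (π ω)⁻¹ * s a * π ω = t := by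
      constructor <;> intro h <;> rw [← h] <;> group
    rw [List.map_cons, List.prod_cons, Equiv.Perm.mul_apply, ih, reflPerm_apply]
    ext
    · simp [mul_assoc, wordProd_cons]
    · simp only [rightInvSeq, List.count_cons, beq_iff_eq, hcond]
      push_cast
      ring

theorem isLiftable_reflPerm : M.IsLiftable cs.reflPerm := by
  intro i j
  rw [← prod_map_alternatingWord_two_mul]
  ext ⟨t, z⟩ : 1
  have hprod : π (alternatingWord i j (2 * M i j)) = 1 := by
    rw [prod_alternatingWord_eq_mul_pow, if_pos (even_two_mul _),
      Nat.mul_div_cancel_left _ two_pos, simple_mul_simple_pow, one_mul]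
  rw [prod_map_reflPerm_apply, hprod,
    (ZMod.natCast_eq_zero_iff_even).2 (cs.even_count_rightInvSeq_alternatingWord i j t)]
  simp

def reflRep : W →* Equiv.Perm (W × ZMod 2) := cs.lift ⟨cs.reflPerm, cs.isLiftable_reflPerm⟩

theorem reflRep_simple (i : B) : cs.reflRep (s i) = cs.reflPerm i :=
  cs.lift_apply_simple cs.isLiftable_reflPerm i

theorem reflRep_wordProd_apply (ω : List B) (t : W) (z : ZMod 2) :
    cs.reflRep (π ω) (t, z) = (π ω * t * (π ω)⁻¹, z + ((ris ω).count t : ZMod 2)) := by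
  rw [← prod_map_reflPerm_apply, wordProd, map_list_prod, List.map_map]
  congr 3
  exact funext cs.reflRep_simple

def invParity (w t : W) : ZMod 2 := (cs.reflRep w (t, 0)).2

theorem invParity_wordProd (ω : List B) (t : W) :
    cs.invParity (π ω) t = (ris ω).count t := by
  simp [invParity, reflRep_wordProd_apply]

theorem reflRep_apply (w : W) (p : W × ZMod 2) :
    cs.reflRep w p = (w * p.1 * w⁻¹, p.2 + cs.invParity w p.1) := by
  obtain ⟨ω, rfl⟩ := cs.wordProd_surjective w
  rw [invParity_wordProd, ← reflRep_wordProd_apply]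

theorem reflRep_apply_self {t : W} (ht : cs.IsReflection t) (z : ZMod 2) :
    cs.reflRep t (t, z) = (t, z + 1) := by
  obtain ⟨u, i, rfl⟩ := ht
  obtain ⟨a, ha⟩ : ∃ a, cs.reflRep u⁻¹ (u * s i * u⁻¹, z) = (s i, a) :=
    ⟨_, Prod.ext (by rw [reflRep_apply]; group) rfl⟩
  have hz : z = a + cs.invParity u (s i) := by
    have := congrArg Prod.snd (congrArg (cs.reflRep u) ha)
    rwa [← Equiv.Perm.mul_apply, ← map_mul, mul_inv_cancel, map_one, Equiv.Perm.one_apply,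
      reflRep_apply] at this
  rw [map_mul, map_mul, Equiv.Perm.mul_apply, Equiv.Perm.mul_apply, ha, reflRep_simple,
    reflPerm_apply, reflRep_apply, hz]
  ext
  · simp [mul_assoc]
  · simp only [simple_mul_simple_cancel_right, if_pos]
    ring

theorem invParity_mul_self (w : W) {t : W} (ht : cs.IsReflection t) :
    cs.invParity (w * t) t = cs.invParity w t + 1 := by
  rw [invParity, map_mul, Equiv.Perm.mul_apply, reflRep_apply_self cs ht, reflRep_apply]
  dsimp only
  ring

end ReflectionRepresentation

theorem mem_rightInvSeq_of_isRightInversion {ω : List B} {t : W}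
    (ht : cs.IsRightInversion (π ω) t) : t ∈ ris ω := by
  classical
  -- otherwise `t` occurs an odd number of times in any word for `π ω * t`, so it is a right
  -- inversion of `π ω * t`
  by_contra hmem
  obtain ⟨ω', hω', hw'⟩ := cs.exists_isReduced (π ω * t)
  have hodd : ((ris ω').count t : ZMod 2) = 1 := by
    rw [← invParity_wordProd, ← hw', invParity_mul_self cs _ ht.1, invParity_wordProd,
      List.count_eq_zero.2 hmem, Nat.cast_zero, zero_add]
  have hmem' : t ∈ ris ω' :=
    List.count_pos_iff.1 (Nat.pos_of_ne_zero fun h => by simp [h] at hodd)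
  have hlt := (cs.isRightInversion_of_mem_rightInvSeq hω' hmem').2
  rw [← hw', mul_assoc, ht.1.mul_self, mul_one] at hlt
  exact absurd ht.2 (by omega)

theorem exists_eraseIdx_wordProd_eq_simple_mul {ω : List B} {i : B}
    (h : ℓ (s i * π ω) < ℓ (π ω)) : ∃ j < ω.length, π (ω.eraseIdx j) = s i * π ω := by
  classical
  have ht : cs.IsRightInversion (π ω) ((π ω)⁻¹ * s i * π ω) := by
    refine ⟨by simpa using (cs.isReflection_simple i).conj (π ω)⁻¹, ?_⟩
    rwa [show π ω * ((π ω)⁻¹ * s i * π ω) = s i * π ω by group]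
  obtain ⟨j, hj, htj⟩ := List.getElem_of_mem (cs.mem_rightInvSeq_of_isRightInversion ht)
  refine ⟨j, by simpa using hj, ?_⟩
  rw [← wordProd_mul_getD_rightInvSeq, List.getD_eq_getElem _ _ hj, htj]
  group

theorem exists_reduced_sublist_wordProd_eq_simple_mul {ω : List B} (hω : cs.IsReduced ω) {i : B}
    (h : ℓ (s i * π ω) < ℓ (π ω)) :
    ∃ ω', ω'.Sublist ω ∧ cs.IsReduced ω' ∧ π ω' = s i * π ω := by
  obtain ⟨j, hj, hprod⟩ := cs.exists_eraseIdx_wordProd_eq_simple_mul h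
  refine ⟨ω.eraseIdx j, List.eraseIdx_sublist ω j, ?_, hprod⟩
  have := List.length_eraseIdx_add_one hj
  have := cs.length_simple_mul (π ω) i
  rw [IsReduced] at hω ⊢
  rw [hprod]
  omega

variable {cs} in
theorem IsReduced.cons_of_length_lt {ω : List B} (hω : cs.IsReduced ω) {i : B}
    (h : ℓ (π ω) < ℓ (s i * π ω)) : cs.IsReduced (i :: ω) := by
  have := cs.length_simple_mul (π ω) i
  rw [IsReduced] at hω ⊢
  rw [wordProd_cons, List.length_cons]
  omega

end CoxeterSystem

section Bruhat

open CoxeterSystem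

variable {B W : Type*} [Group W] {M : CoxeterMatrix B} {cs : CoxeterSystem M W}

local prefix:100 "s" => cs.simple
local prefix:100 "π" => cs.wordProd
local prefix:100 "ℓ" => cs.length

theorem bruhatLE_trans {u v w : W} (huv : bruhatLE cs u v) (hvw : bruhatLE cs v w) :
    bruhatLE cs u w := by
  intro ω hω hw
  obtain ⟨ω₁, h₁, hω₁, hw₁⟩ := hvw ω hω hw
  obtain ⟨ω₂, h₂, hω₂, hw₂⟩ := huv ω₁ hω₁ hw₁
  exact ⟨ω₂, h₂.trans h₁, hω₂, hw₂⟩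

theorem bruhatLE.length_le {v w : W} (h : bruhatLE cs v w) : ℓ v ≤ ℓ w := by
  obtain ⟨ω, hω, rfl⟩ := cs.exists_isReduced w
  obtain ⟨τ, hτω, hτ, rfl⟩ := h ω hω rfl
  rw [hτ.eq, hω.eq]
  exact hτω.length_le

theorem bruhatLT.length_lt {v w : W} (h : bruhatLT cs v w) : ℓ v < ℓ w := by
  obtain ⟨ω, hω, rfl⟩ := cs.exists_isReduced w
  obtain ⟨τ, hτω, hτ, rfl⟩ := h.1 ω hω rfl
  rw [hτ.eq, hω.eq]
  exact lt_of_le_of_ne hτω.length_le fun heq => h.2 (by rw [hτω.eq_of_length heq])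

theorem bruhatLT_of_lt_of_le {u v w : W} (huv : bruhatLT cs u v) (hvw : bruhatLE cs v w) :
    bruhatLT cs u w := by
  refine ⟨bruhatLE_trans huv.1 hvw, ?_⟩
  rintro rfl
  exact absurd huv.length_lt (not_lt.2 hvw.length_le)

theorem bruhatLT_simple_mul {w : W} {i : B} (h : ℓ w < ℓ (s i * w)) :
    bruhatLT cs w (s i * w) := by
  refine ⟨fun ω hω hw => ?_, fun heq => ?_⟩
  · have hlt : ℓ (s i * π ω) < ℓ (π ω) := by rwa [hw, simple_mul_simple_cancel_left]
    simpa [hw, simple_mul_simple_cancel_left] using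
      cs.exists_reduced_sublist_wordProd_eq_simple_mul hω hlt
  · rw [← heq] at h
    exact lt_irrefl _ h

theorem bruhatLE_lifting {v w : W} {i : B} (hw : ℓ w < ℓ (s i * w))
    (hv : bruhatLE cs v (s i * w)) (hvw : ¬ bruhatLE cs v w) :
    ℓ (s i * v) < ℓ v ∧ bruhatLE cs (s i * v) w := by
  have key : ∀ ω, cs.IsReduced ω → π ω = w →
      (∃ τ, τ.Sublist ω ∧ cs.IsReduced τ ∧ π τ = v) ∨
      (∃ τ, τ.Sublist ω ∧ cs.IsReduced τ ∧ π τ = s i * v ∧ ℓ (s i * v) < ℓ v) := by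
    rintro ω hω rfl
    obtain ⟨τ, hτ, hτred, rfl⟩ := hv (i :: ω) (hω.cons_of_length_lt hw) (wordProd_cons ..)
    rcases List.sublist_cons_iff.1 hτ with hτω | ⟨τ', rfl, hτ'⟩
    · exact Or.inl ⟨τ, hτω, hτred, rfl⟩
    · have hsv : s i * π (i :: τ') = π τ' := by rw [wordProd_cons, simple_mul_simple_cancel_left]
      refine Or.inr ⟨τ', hτ', hτred.drop 1, hsv.symm, ?_⟩
      rw [hsv, hτred.eq, List.length_cons]
      exact Nat.lt_succ_of_le (cs.length_wordProd_le τ')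
  unfold bruhatLE at hvw
  push Not at hvw
  obtain ⟨ω₀, hω₀, hπ₀, hno⟩ := hvw
  have hlen : ℓ (s i * v) < ℓ v := by
    rcases key ω₀ hω₀ hπ₀ with ⟨τ, hτ, hτred, hτv⟩ | ⟨_, _, _, _, hlt⟩
    · exact absurd hτv (hno τ hτ hτred)
    · exact hlt
  refine ⟨hlen, fun ω hω hπ => ?_⟩
  rcases key ω hω hπ with ⟨τ, hτ, hτred, rfl⟩ | ⟨τ, hτ, hτred, hτv, -⟩
  · obtain ⟨τ', hτ', hτ'red, hτ'v⟩ := cs.exists_reduced_sublist_wordProd_eq_simple_mul hτred hlen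
    exact ⟨τ', hτ'.trans hτ, hτ'red, hτ'v⟩
  · exact ⟨τ, hτ, hτred, hτv⟩

end Bruhat

namespace Crystal

variable {I X : Type*} {c : Crystal I X}

variable (c) in
theorem fIter_add (i : I) (d e : ℕ) (x : X) :
    c.fIter i (d + e) x = (c.fIter i d x).bind (c.fIter i e) := by
  induction d generalizing x with
  | zero => simp [fIter]
  | succ d ih => simp [Nat.succ_add, fIter, ih, Option.bind_assoc]

theorem IsTop.eq_of_fIter {i : I} {d : ℕ} {x y : X} (hy : c.IsTop i y)
    (h : c.fIter i d x = some y) : x = y := by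
  induction d generalizing x with
  | zero => exact Option.some.inj h
  | succ d ih =>
    obtain ⟨z, hxz, hzy⟩ := Option.bind_eq_some_iff.1 h
    obtain rfl := ih hzy
    have hzx := (c.ef i x z).1 hxz
    rw [IsTop] at hy
    simp [hy] at hzx

theorem sameString_of_fIter {i : I} {d : ℕ} {x y : X} (h : c.fIter i d x = some y) :
    c.SameString i x y := by
  induction d generalizing x with
  | zero =>
    obtain rfl := Option.some.inj h
    exact Relation.EqvGen.refl x
  | succ d ih =>
    obtain ⟨z, hxz, hzy⟩ := Option.bind_eq_some_iff.1 h
    exact .trans _ _ _ (.symm _ _ (.rel z x ((c.ef i x z).1 hxz))) (ih hzy)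

variable (c) in
def RaiseClosed (i : I) (S : Set X) : Prop := ∀ x y, x ∈ S → c.e i x = some y → y ∈ S

theorem RaiseClosed.mem_of_fIter {i : I} {S : Set X} (hS : c.RaiseClosed i S) {d : ℕ} {x y : X}
    (h : c.fIter i d x = some y) (hy : y ∈ S) : x ∈ S := by
  induction d generalizing x with
  | zero => rwa [Option.some.inj h]
  | succ d ih =>
    obtain ⟨z, hxz, hzy⟩ := Option.bind_eq_some_iff.1 h
    exact hS z x (ih hzy) ((c.ef i x z).1 hxz)

theorem Extremal.isTop_of_fIter {S : Set X} (hS : c.Extremal S) {i : I} {d : ℕ} {x y : X}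
    (hx : x ∈ S) (h : c.fIter i d x = some y) (hy : y ∉ S) : c.IsTop i x := by
  have hxS : x ∈ S ∩ c.string i x := ⟨hx, Relation.EqvGen.refl x⟩
  rcases hS i x with hempty | ⟨u, -, hu, hsingle⟩ | hfull
  · simp [hempty] at hxS
  · rw [hsingle, Set.mem_singleton_iff] at hxS
    rwa [hxS]
  · exact absurd (hfull (sameString_of_fIter h)) hy

variable (c) in
theorem subset_Fset (i : I) (S : Set X) : S ⊆ c.Fset i S := fun x hx => ⟨x, hx, 0, rfl⟩

variable (c) in
/-- Kashiwara's Demazure operator `𝔇_i`. -/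
def demazureOp (i : I) (T : Set X) : Set X :=
  {y | ∃ x ∈ T, c.e i x = none ∧ ∃ d : ℕ, c.fIter i d x = some y}

variable (c) in
theorem Fset_demazureOp_subset (i : I) (T : Set X) :
    c.Fset i (c.demazureOp i T) ⊆ c.demazureOp i T := by
  rintro z ⟨y, ⟨x, hx, htop, d, hxy⟩, e, hyz⟩
  exact ⟨x, hx, htop, d + e, by rw [c.fIter_add, hxy]; exact hyz⟩

variable (c) in
theorem demazureOp_mono (i : I) {T T' : Set X} (h : T ⊆ T') :
    c.demazureOp i T ⊆ c.demazureOp i T' :=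
  fun _ ⟨x, hx, hrest⟩ => ⟨x, h hx, hrest⟩

theorem mem_of_mem_demazureOp {i : I} {T : Set X} {x : X} (hx : x ∈ c.demazureOp i T)
    (htop : c.IsTop i x) : x ∈ T := by
  obtain ⟨u, hu, -, d, hux⟩ := hx
  rwa [← htop.eq_of_fIter hux]

end Crystal

section Demazure

open CoxeterSystem Crystal

variable {I X W : Type*} [Group W] {M : CoxeterMatrix I}

structure IsDemazureFamily (cs : CoxeterSystem M W) (c : Crystal I X) (𝔅 : W → Set X)
    (Wl : Set W) : Prop where
  simple_mul_mem : ∀ w ∈ Wl, ∀ i : I, cs.length (cs.simple i * w) < cs.length w →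
    cs.simple i * w ∈ Wl
  raiseClosed : ∀ w i, c.RaiseClosed i (𝔅 w)
  eq_demazureOp : ∀ w i, cs.length (cs.simple i * w) < cs.length w →
    𝔅 w = c.demazureOp i (𝔅 (cs.simple i * w))
  extremal : ∀ w, c.Extremal (𝔅 w)
  subset_iff_bruhatLE : ∀ v ∈ Wl, ∀ w ∈ Wl, 𝔅 v ⊆ 𝔅 w ↔ bruhatLE cs v w
  eq_of_simple_mul_not_mem : ∀ w ∈ Wl, ∀ i : I, cs.length w < cs.length (cs.simple i * w) →
    cs.simple i * w ∉ Wl → 𝔅 (cs.simple i * w) = 𝔅 w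

def demazureAtom (cs : CoxeterSystem M W) (𝔅 : W → Set X) (Wl : Set W) (w : W) : Set X :=
  𝔅 w \ ⋃ v ∈ {v | v ∈ Wl ∧ bruhatLT cs v w}, 𝔅 v

variable {cs : CoxeterSystem M W} {c : Crystal I X} {𝔅 : W → Set X} {Wl : Set W}

local prefix:100 "s" => cs.simple
local prefix:100 "ℓ" => cs.length

theorem mem_demazureAtom {w : W} {x : X} :
    x ∈ demazureAtom cs 𝔅 Wl w ↔ x ∈ 𝔅 w ∧ ∀ v ∈ Wl, bruhatLT cs v w → x ∉ 𝔅 v := by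
  simp [demazureAtom]

theorem disjoint_demazureAtom_of_bruhatLT {v w : W} (hv : v ∈ Wl) (hvw : bruhatLT cs v w) :
    Disjoint (demazureAtom cs 𝔅 Wl v) (demazureAtom cs 𝔅 Wl w) :=
  Set.disjoint_left.2 fun _ hxv hxw => (mem_demazureAtom.1 hxw).2 v hv hvw hxv.1

namespace IsDemazureFamily

theorem eq_demazureOp_simple_mul (h : IsDemazureFamily cs c 𝔅 Wl) {w : W} {i : I}
    (hw : ℓ w < ℓ (s i * w)) : 𝔅 (s i * w) = c.demazureOp i (𝔅 w) := by
  rw [h.eq_demazureOp _ i (by rwa [simple_mul_simple_cancel_left]),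
    simple_mul_simple_cancel_left]

theorem Fset_subset (h : IsDemazureFamily cs c 𝔅 Wl) {v : W} (hv : v ∈ Wl) {i : I}
    (hvi : ℓ (s i * v) < ℓ v ∨ s i * v ∉ Wl) : c.Fset i (𝔅 v) ⊆ 𝔅 v := by
  rcases hvi with hlt | hnot
  · rw [h.eq_demazureOp v i hlt]
    exact c.Fset_demazureOp_subset i _
  · have hlt : ℓ v < ℓ (s i * v) := by
      rcases cs.length_simple_mul v i with hup | hdown
      · omega
      · exact absurd (h.simple_mul_mem v hv i (by omega)) hnot
    have hfix : 𝔅 v = c.demazureOp i (𝔅 v) :=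
      (h.eq_of_simple_mul_not_mem v hv i hlt hnot).symm.trans (h.eq_demazureOp_simple_mul hlt)
    rw [hfix]
    exact c.Fset_demazureOp_subset i _

theorem fIter_mem_demazureAtom (h : IsDemazureFamily cs c 𝔅 Wl) {w : W} {i : I} {d : ℕ}
    {x y : X} (hx : x ∈ demazureAtom cs 𝔅 Wl w) (hxy : c.fIter i d x = some y) (hy : y ∈ 𝔅 w) :
    y ∈ demazureAtom cs 𝔅 Wl w :=
  mem_demazureAtom.2 ⟨hy, fun v hv hvw hyv =>
    (mem_demazureAtom.1 hx).2 v hv hvw ((h.raiseClosed v i).mem_of_fIter hxy hyv)⟩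

theorem Fset_demazureAtom_eq (h : IsDemazureFamily cs c 𝔅 Wl) {w : W} (hw : w ∈ Wl) {i : I}
    (hwi : ℓ (s i * w) < ℓ w ∨ s i * w ∉ Wl) :
    c.Fset i (demazureAtom cs 𝔅 Wl w) = demazureAtom cs 𝔅 Wl w := by
  refine Set.Subset.antisymm ?_ (c.subset_Fset i _)
  rintro y ⟨x, hx, d, hxy⟩
  exact h.fIter_mem_demazureAtom hx hxy (h.Fset_subset hw hwi ⟨x, hx.1, d, hxy⟩)

theorem Fset_demazureAtom_subset_union (h : IsDemazureFamily cs c 𝔅 Wl) {w : W} {i : I}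
    (hwi : ℓ w < ℓ (s i * w)) :
    c.Fset i (demazureAtom cs 𝔅 Wl w) ⊆
      demazureAtom cs 𝔅 Wl w ∪ demazureAtom cs 𝔅 Wl (s i * w) := by
  rintro y ⟨x, hx, d, hxy⟩
  by_cases hyw : y ∈ 𝔅 w
  · exact Or.inl (h.fIter_mem_demazureAtom hx hxy hyw)
  rw [mem_demazureAtom] at hx
  have htop : c.IsTop i x := (h.extremal w).isTop_of_fIter hx.1 hxy hyw
  refine Or.inr (mem_demazureAtom.2 ⟨?_, fun v hv hvsw hyv => ?_⟩)
  · rw [h.eq_demazureOp_simple_mul hwi]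
    exact ⟨x, hx.1, htop, d, hxy⟩
  have hxv : x ∈ 𝔅 v := (h.raiseClosed v i).mem_of_fIter hxy hyv
  by_cases hvw : bruhatLE cs v w
  · exact hx.2 v hv ⟨hvw, by rintro rfl; exact hyw hyv⟩ hxv
  -- by the lifting property `s_i v < w`, and `x ∈ B_{s_i v}` because `x` is `e_i`-highest
  obtain ⟨hvi, hsvw⟩ := bruhatLE_lifting hwi hvsw.1 hvw
  refine hx.2 _ (h.simple_mul_mem v hv i hvi) ⟨hsvw, fun heq => hvsw.2 ?_⟩
    (mem_of_mem_demazureOp (h.eq_demazureOp v i hvi ▸ hxv) htop)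
  rw [← heq, simple_mul_simple_cancel_left]

theorem demazureAtom_simple_mul_subset_Fset (h : IsDemazureFamily cs c 𝔅 Wl) {w : W}
    (hw : w ∈ Wl) {i : I} (hwi : ℓ w < ℓ (s i * w)) (hsw : s i * w ∈ Wl) :
    demazureAtom cs 𝔅 Wl (s i * w) ⊆ c.Fset i (demazureAtom cs 𝔅 Wl w) := by
  intro y hy
  rw [mem_demazureAtom] at hy
  obtain ⟨u, hu, htop, d, huy⟩ : y ∈ c.demazureOp i (𝔅 w) :=
    h.eq_demazureOp_simple_mul hwi ▸ hy.1
  refine ⟨u, mem_demazureAtom.2 ⟨hu, fun v hv hvw huv => ?_⟩, d, huy⟩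
  have hvsw : bruhatLT cs v (s i * w) := bruhatLT_of_lt_of_le hvw (bruhatLT_simple_mul hwi).1
  by_cases hvi : ℓ (s i * v) < ℓ v ∨ s i * v ∉ Wl
  · exact hy.2 v hv hvsw (h.Fset_subset hv hvi ⟨u, huv, d, huy⟩)
  push Not at hvi
  have hvi' : ℓ v < ℓ (s i * v) :=
    lt_of_le_of_ne hvi.1 (cs.length_simple_mul_ne v i).symm
  have hsub : 𝔅 (s i * v) ⊆ 𝔅 (s i * w) := by
    rw [h.eq_demazureOp_simple_mul hvi', h.eq_demazureOp_simple_mul hwi]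
    exact c.demazureOp_mono i ((h.subset_iff_bruhatLE v hv w hw).2 hvw.1)
  refine hy.2 _ hvi.2 ⟨(h.subset_iff_bruhatLE _ hvi.2 _ hsw).1 hsub,
    fun heq => hvw.2 (mul_left_cancel heq)⟩ ?_
  rw [h.eq_demazureOp_simple_mul hvi']
  exact ⟨u, huv, htop, d, huy⟩

end IsDemazureFamily

end Demazure

theorem stmt14_general {I X W : Type*} [Group W] {M : CoxeterMatrix I}
    (cs : CoxeterSystem M W) (c : Crystal I X)
    -- the Demazure crystals `B_w(λ)` and the minimal coset representatives `W^λ`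
    (𝔅 : W → Set X) (Wl : Set W)
    -- `W^λ` contains the identity and is closed under length-decreasing left
    -- multiplication by simple reflections
    (hWl_closed : ∀ w ∈ Wl, ∀ i : I,
      cs.length (cs.simple i * w) < cs.length w → cs.simple i * w ∈ Wl)
    -- Kashiwara (1): closure under the raising operators, `E_i(B_w(λ)) ⊆ B_w(λ)`
    (h_raise : ∀ (w : W) (i : I) (x y : X), x ∈ 𝔅 w → c.e i x = some y → y ∈ 𝔅 w)
    -- Kashiwara (2): if `s_i w < w` then `B_w(λ)` is obtained from the `e_i`-highest
    -- elements of `B_{s_i w}(λ)` by applying `f_i` arbitrarily many times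
    (h_lower : ∀ (w : W) (i : I), cs.length (cs.simple i * w) < cs.length w →
      𝔅 w = {y | ∃ x ∈ 𝔅 (cs.simple i * w), c.e i x = none ∧
        ∃ d : ℕ, c.fIter i d x = some y})
    -- Kashiwara (3): the string property (extremality)
    (h_string : ∀ w : W, c.Extremal (𝔅 w))
    -- containment mirrors Bruhat order on `W^λ`
    (h_contain : ∀ v ∈ Wl, ∀ w ∈ Wl, (𝔅 v ⊆ 𝔅 w ↔ bruhatLE cs v w))
    -- the Demazure atoms `A_w(λ) = B_w(λ) ∖ ⋃_{v < w} B_v(λ)`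
    (𝔄 : W → Set X)
    (h𝔄 : ∀ w : W, 𝔄 w = 𝔅 w \ ⋃ v ∈ {v | v ∈ Wl ∧ bruhatLT cs v w}, 𝔅 v)
    -- if `w ∈ W^λ`, `w < s_i w` and `s_i w ∉ W^λ`, then `w·λ = s_i w·λ`, and so
    -- `B_{s_i w}(λ) = B_w(λ)`
    (h_coset : ∀ w ∈ Wl, ∀ i : I, cs.length w < cs.length (cs.simple i * w) →
      cs.simple i * w ∉ Wl → 𝔅 (cs.simple i * w) = 𝔅 w)
    (w : W) (hw : w ∈ Wl) (i : I) :
    (cs.length (cs.simple i * w) < cs.length w ∨ cs.simple i * w ∉ Wl →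
        c.Fset i (𝔄 w) = 𝔄 w) ∧
      (cs.length w < cs.length (cs.simple i * w) → cs.simple i * w ∈ Wl →
        c.Fset i (𝔄 w) = 𝔄 w ∪ 𝔄 (cs.simple i * w) ∧
          Disjoint (𝔄 w) (𝔄 (cs.simple i * w))) := by
  have h : IsDemazureFamily cs c 𝔅 Wl :=
    ⟨hWl_closed, h_raise, h_lower, h_string, h_contain, h_coset⟩
  obtain rfl : 𝔄 = demazureAtom cs 𝔅 Wl := funext h𝔄
  refine ⟨h.Fset_demazureAtom_eq hw, fun hwi hsw => ⟨?_, ?_⟩⟩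
  · exact (h.Fset_demazureAtom_subset_union hwi).antisymm
      (Set.union_subset (c.subset_Fset i _) (h.demazureAtom_simple_mul_subset_Fset hw hwi hsw))
  · exact disjoint_demazureAtom_of_bruhatLT hw (bruhatLT_simple_mul hwi)

/-- for `w ∈ W^λ` and `i ∈ I`: `F_i(A_w(λ)) = A_w(λ)` if `s_i w < w`
or `s_i w ∉ W^λ`, while `F_i(A_w(λ)) = A_w(λ) ⊔ A_{s_i w}(λ)` (a disjoint union)
if `w < s_i w` and `s_i w ∈ W^λ`. -/
theorem stmt14 {I X W : Type*} [Finite X] [Group W] {M : CoxeterMatrix I}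
    (cs : CoxeterSystem M W) (c : Crystal I X)
    -- `b` is the highest weight element of the highest weight crystal `X = B(λ)`
    (b : X) (hb : c.IsHighestWeight b)
    -- the Demazure crystals `B_w(λ)` and the minimal coset representatives `W^λ`
    (𝔅 : W → Set X) (Wl : Set W)
    -- `W^λ` contains the identity and is closed under length-decreasing left
    -- multiplication by simple reflections
    (hWl_one : (1 : W) ∈ Wl)
    (hWl_closed : ∀ w ∈ Wl, ∀ i : I,
      cs.length (cs.simple i * w) < cs.length w → cs.simple i * w ∈ Wl)
    -- `B_id(λ) = {b_λ}`
    (h𝔅_one : 𝔅 1 = {b})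
    -- Kashiwara (1): closure under the raising operators, `E_i(B_w(λ)) ⊆ B_w(λ)`
    (h_raise : ∀ (w : W) (i : I) (x y : X), x ∈ 𝔅 w → c.e i x = some y → y ∈ 𝔅 w)
    -- Kashiwara (2): if `s_i w < w` then `B_w(λ)` is obtained from the `e_i`-highest
    -- elements of `B_{s_i w}(λ)` by applying `f_i` arbitrarily many times
    (h_lower : ∀ (w : W) (i : I), cs.length (cs.simple i * w) < cs.length w →
      𝔅 w = {y | ∃ x ∈ 𝔅 (cs.simple i * w), c.e i x = none ∧
        ∃ d : ℕ, c.fIter i d x = some y})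
    -- Kashiwara (3): the string property (extremality)
    (h_string : ∀ w : W, c.Extremal (𝔅 w))
    -- containment mirrors Bruhat order on `W^λ`
    (h_contain : ∀ v ∈ Wl, ∀ w ∈ Wl, (𝔅 v ⊆ 𝔅 w ↔ bruhatLE cs v w))
    -- the Demazure atoms `A_w(λ) = B_w(λ) ∖ ⋃_{v < w} B_v(λ)`
    (𝔄 : W → Set X)
    (h𝔄 : ∀ w : W, 𝔄 w = 𝔅 w \ ⋃ v ∈ {v | v ∈ Wl ∧ bruhatLT cs v w}, 𝔅 v)
    -- if `w ∈ W^λ`, `w < s_i w` and `s_i w ∉ W^λ`, then `w·λ = s_i w·λ`, and so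
    -- `B_{s_i w}(λ) = B_w(λ)`
    (h_coset : ∀ w ∈ Wl, ∀ i : I, cs.length w < cs.length (cs.simple i * w) →
      cs.simple i * w ∉ Wl → 𝔅 (cs.simple i * w) = 𝔅 w)
    (w : W) (hw : w ∈ Wl) (i : I) :
    (cs.length (cs.simple i * w) < cs.length w ∨ cs.simple i * w ∉ Wl →
        c.Fset i (𝔄 w) = 𝔄 w) ∧
      (cs.length w < cs.length (cs.simple i * w) → cs.simple i * w ∈ Wl →
        c.Fset i (𝔄 w) = 𝔄 w ∪ 𝔄 (cs.simple i * w) ∧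
          Disjoint (𝔄 w) (𝔄 (cs.simple i * w))) :=
  stmt14_general cs c 𝔅 Wl hWl_closed h_raise h_lower h_string h_contain 𝔄 h𝔄 h_coset w hw i
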